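/- On the stable big space (V × ℝʰ) ⊕ (V* × ℝʰ) with the natural neutral pairing G, the set L = {(♯_W α − u·Z, α(Z)) ⊕ (α, u) : α ∈ V*, u ∈ ℝʰ}, where W is a skew-symmetric bivector on V with ♯_W α defined by β(♯_W α) = W(α,β), and Z = (Z₁,…,Z_h) is an h-tuple of vectors in V with α(Z) = (α(Zₐ)), is a maximally isotropic subspace of dimension dim V + h. -/

import Mathlib

open scoped BigOperators

/-- The natural neutral pairing on the stable big space
`(V × ℝʰ) ⊕ (V* × ℝʰ)`. -/
noncomputable def stablePairing (V : Type*) [AddCommGroup V] [Module ℝ V] (h : ℕ)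
    (p q : (V × (Fin h → ℝ)) × (Module.Dual ℝ V × (Fin h → ℝ))) : ℝ :=
  (1 / 2) * (q.2.1 p.1.1 + p.2.1 q.1.1 +
    ∑ a, p.1.2 a * q.2.2 a + ∑ a, q.1.2 a * p.2.2 a)

/-!
`L` is the range of `x ↦ (S x, x)` for the linear map `S (α, u) = (♯_W α − u·Z, α(Z))`, so it
is isomorphic to `V* × ℝʰ`, of dimension `dim V + h`. Pairing two such points, the terms
`β(♯_W α) + α(♯_W β)` cancel by skew-symmetry of `W`, and each `−u·β(Z)` coming from the
first components cancels the matching `β(Z)·u` coming from the second ones.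
-/

open Module

theorem LinearMap.finrank_range_prod_id {R M N : Type*} [Ring R] [StrongRankCondition R]
    [AddCommGroup M] [Module R M] [AddCommGroup N] [Module R N] [Module.Free R M]
    [Module.Finite R M] (f : M →ₗ[R] N) :
    finrank R (LinearMap.range (f.prod LinearMap.id)) = finrank R M :=
  LinearMap.finrank_range_of_inj fun _ _ hxy => congrArg Prod.snd hxy

section StableSharp

variable {V : Type*} [AddCommGroup V] [Module ℝ V] {h : ℕ}

noncomputable def stableSharp (sharpW : Dual ℝ V →ₗ[ℝ] V) (Z : Fin h → V) :
    Dual ℝ V × (Fin h → ℝ) →ₗ[ℝ] V × (Fin h → ℝ) :=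
  (sharpW ∘ₗ LinearMap.fst ℝ _ _ - Fintype.linearCombination ℝ Z ∘ₗ LinearMap.snd ℝ _ _).prod
    (LinearMap.pi fun a => Dual.eval ℝ V (Z a) ∘ₗ LinearMap.fst ℝ _ _)

theorem stableSharp_apply (sharpW : Dual ℝ V →ₗ[ℝ] V) (Z : Fin h → V)
    (x : Dual ℝ V × (Fin h → ℝ)) :
    stableSharp sharpW Z x = (sharpW x.1 - ∑ a, x.2 a • Z a, fun a => x.1 (Z a)) := by
  rfl

theorem stablePairing_stableSharp_eq_zero {sharpW : Dual ℝ V →ₗ[ℝ] V}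
    (hW : ∀ α β : Dual ℝ V, β (sharpW α) = -α (sharpW β)) (Z : Fin h → V)
    (x y : Dual ℝ V × (Fin h → ℝ)) :
    stablePairing V h (stableSharp sharpW Z x, x) (stableSharp sharpW Z y, y) = 0 := by
  obtain ⟨α, u⟩ := x
  obtain ⟨β, v⟩ := y
  simp only [stablePairing, stableSharp_apply, map_sub, map_sum, map_smul, smul_eq_mul, hW α β]
  have hu : ∑ a, u a * β (Z a) = ∑ a, β (Z a) * u a := by simp only [mul_comm]
  have hv : ∑ a, v a * α (Z a) = ∑ a, α (Z a) * v a := by simp only [mul_comm]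
  rw [hu, hv]
  ring

end StableSharp

theorem stmt2 (V : Type*) [AddCommGroup V] [Module ℝ V] [FiniteDimensional ℝ V]
    (h : ℕ) (sharpW : Module.Dual ℝ V →ₗ[ℝ] V)
    (hW : ∀ α β : Module.Dual ℝ V, β (sharpW α) = -α (sharpW β))
    (Z : Fin h → V)
    (L : Submodule ℝ ((V × (Fin h → ℝ)) × (Module.Dual ℝ V × (Fin h → ℝ))))
    (hL : ∀ p, p ∈ L ↔ ∃ (α : Module.Dual ℝ V) (u : Fin h → ℝ),
        p = ((sharpW α - ∑ a, u a • Z a, fun a => α (Z a)), (α, u))) :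
    (∀ p ∈ L, ∀ q ∈ L, stablePairing V h p q = 0) ∧
    Module.finrank ℝ L = Module.finrank ℝ V + h := by
  obtain rfl : L = LinearMap.range ((stableSharp sharpW Z).prod LinearMap.id) := by
    ext p
    simp only [hL, LinearMap.mem_range, Prod.exists, eq_comm]
    rfl
  refine ⟨?_, ?_⟩
  · rintro _ ⟨x, rfl⟩ _ ⟨y, rfl⟩
    exact stablePairing_stableSharp_eq_zero hW Z x y
  · rw [LinearMap.finrank_range_prod_id, finrank_prod, Subspace.dual_finrank_eq,
      finrank_fin_fun]
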